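/- Any (α,β)-admissible smoothing of the nuclear norm must satisfy αβ ≥ 1/2. That is, if a family of functions Ψ̃(·;L) parametrized by PSD matrices L satisfies dominance (Ψ̃(X;L) ≥ ||X||_* and Ψ̃(X;0) = ||X||_*), upper stability (Ψ̃(X;L₂) − Ψ̃(X;L₁) ≤ α(tr L₂ − tr L₁) for L₁ ⪯ L₂), and β-smoothness (the Bregman divergence of Ψ̃(·;L) satisfies D(Y,X) ≤ (β/2) tr((X−Y)^T L^{-1}(X−Y)) for L ≻ 0), then αβ ≥ 1/2. -/

import Mathlib

/-!
Comparing `Ψ(0; L)` with `Ψ(0; 0) = 0` by upper stability, and adding the smoothness inequalities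
at the base point `0` in the directions `X` and `-X` (where the gradient terms cancel), gives
`‖X‖_* ≤ α tr L + (β/2) tr (Xᵀ L⁻¹ X)` for every `L ≻ 0`. For the matrix unit `X = E₁₁` and
`L = diag(u, ε, …, ε)` this reads `1 ≤ α (u + (m - 1) ε) + β / (2u)`; letting `ε → 0` and
choosing `u = 1 / (2α)` yields `αβ ≥ 1/2`.
-/

open Matrix Finset
open scoped Classical

noncomputable def psqrt {m : ℕ} (A : Matrix (Fin m) (Fin m) ℝ) : Matrix (Fin m) (Fin m) ℝ :=
  if h : A.PosSemidef then (h.1.eigenvectorUnitary : Matrix (Fin m) (Fin m) ℝ) *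
    diagonal (((↑) : ℝ → ℝ) ∘ Real.sqrt ∘ h.1.eigenvalues) *
    (star h.1.eigenvectorUnitary : Matrix (Fin m) (Fin m) ℝ) else 0

noncomputable def nuclearNorm {m : ℕ} {n : Type*} [Fintype n]
    (A : Matrix (Fin m) n ℝ) : ℝ :=
  (psqrt (A * Aᵀ)).trace

noncomputable def ip {m : ℕ} {n : Type*} [Fintype n] (A B : Matrix (Fin m) n ℝ) : ℝ :=
  (Aᵀ * B).trace

lemma psqrt_eq_cfc_sqrt {m : ℕ} {A : Matrix (Fin m) (Fin m) ℝ} (hA : A.PosSemidef) :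
    psqrt A = cfc Real.sqrt A := by
  rw [psqrt, dif_pos hA, hA.1.cfc_eq]
  rfl

lemma psqrt_eq_self_of_isIdempotentElem {m : ℕ} {A : Matrix (Fin m) (Fin m) ℝ}
    (hA : A.PosSemidef) (hidem : IsIdempotentElem A) : psqrt A = A := by
  rw [psqrt_eq_cfc_sqrt hA]
  calc cfc Real.sqrt A = cfc id A := cfc_congr fun x hx => by
        rcases hidem.spectrum_subset ℝ hx with rfl | rfl <;> simp
    _ = A := cfc_id ℝ A hA.1

lemma nuclearNorm_zero {m : ℕ} {n : Type*} [Fintype n] :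
    nuclearNorm (0 : Matrix (Fin m) n ℝ) = 0 := by
  simp [nuclearNorm, psqrt_eq_self_of_isIdempotentElem PosSemidef.zero IsIdempotentElem.zero]

lemma nuclearNorm_neg {m : ℕ} {n : Type*} [Fintype n] (X : Matrix (Fin m) n ℝ) :
    nuclearNorm (-X) = nuclearNorm X := by
  simp [nuclearNorm]

lemma nuclearNorm_single_one {m : ℕ} {n : Type*} [Fintype n] [DecidableEq n]
    (i : Fin m) (j : n) :
    nuclearNorm (single i j 1 : Matrix (Fin m) n ℝ) = 1 := by
  have hE : (single i j 1 : Matrix (Fin m) n ℝ) * (single i j 1 : Matrix (Fin m) n ℝ)ᵀ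
      = single i i 1 := by
    rw [transpose_single, single_mul_single_same, mul_one]
  have hpsd : (single i i 1 : Matrix (Fin m) (Fin m) ℝ).PosSemidef := by
    simpa [hE] using posSemidef_self_mul_conjTranspose (single i j 1 : Matrix (Fin m) n ℝ)
  rw [nuclearNorm, hE, psqrt_eq_self_of_isIdempotentElem hpsd, trace_single_eq_same]
  simp [IsIdempotentElem, single_mul_single_same]

lemma inv_diagonal_of_ne_zero {ι : Type*} [Fintype ι] [DecidableEq ι] {v : ι → ℝ}
    (hv : ∀ i, v i ≠ 0) :
    (diagonal v)⁻¹ = diagonal v⁻¹ :=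
  inv_eq_left_inv <| by rw [diagonal_mul_diagonal, ← diagonal_one]; congr; ext i; simp [hv]

lemma trace_transpose_single_mul_diagonal_mul_single {ι κ : Type*} [Fintype ι] [DecidableEq ι]
    [Fintype κ] [DecidableEq κ] (d : ι → ℝ) (i : ι) (j : κ) :
    ((single i j (1 : ℝ))ᵀ * diagonal d * single i j (1 : ℝ)).trace = d i := by
  rw [transpose_single]
  simp [trace]

lemma trace_diagonal_update {ι : Type*} [Fintype ι] [DecidableEq ι] (i : ι) (u ε : ℝ) :
    (diagonal (Function.update (fun _ => ε) i u)).trace = u + (Fintype.card ι - 1) * ε := by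
  rw [trace_diagonal, sum_update_of_mem (mem_univ i)]
  simp [card_sdiff, Nat.cast_sub (Fintype.card_pos_iff.2 ⟨i⟩)]

section Admissible

variable {m : ℕ} {n : Type*} [Fintype n] {α β : ℝ}
  {Ψ : Matrix (Fin m) n ℝ → Matrix (Fin m) (Fin m) ℝ → ℝ}
  {g : Matrix (Fin m) n ℝ → Matrix (Fin m) (Fin m) ℝ → Matrix (Fin m) n ℝ}

lemma apply_zero_le_mul_trace (hzero : ∀ X, Ψ X 0 = nuclearNorm X)
    (hstab : ∀ L₁ L₂ : Matrix (Fin m) (Fin m) ℝ, L₁.PosSemidef → (L₂ - L₁).PosSemidef →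
      ∀ X, Ψ X L₂ - Ψ X L₁ ≤ α * (L₂.trace - L₁.trace))
    {L : Matrix (Fin m) (Fin m) ℝ} (hL : L.PosSemidef) : Ψ 0 L ≤ α * L.trace := by
  have h := hstab 0 L .zero (by rwa [sub_zero]) 0
  rwa [hzero, nuclearNorm_zero, trace_zero, sub_zero, sub_zero] at h

lemma nuclearNorm_le_mul_trace_add_of_admissible
    (hdom : ∀ (L : Matrix (Fin m) (Fin m) ℝ), L.PosSemidef → ∀ X, nuclearNorm X ≤ Ψ X L)
    (hzero : ∀ X, Ψ X 0 = nuclearNorm X)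
    (hstab : ∀ L₁ L₂ : Matrix (Fin m) (Fin m) ℝ, L₁.PosSemidef → (L₂ - L₁).PosSemidef →
      ∀ X, Ψ X L₂ - Ψ X L₁ ≤ α * (L₂.trace - L₁.trace))
    (hsmooth : ∀ L : Matrix (Fin m) (Fin m) ℝ, L.PosDef → ∀ X Y,
      Ψ Y L - Ψ X L - ip (g X L) (Y - X) ≤ β / 2 * ((X - Y)ᵀ * L⁻¹ * (X - Y)).trace)
    {L : Matrix (Fin m) (Fin m) ℝ} (hL : L.PosDef) (X : Matrix (Fin m) n ℝ) :
    nuclearNorm X ≤ α * L.trace + β / 2 * (Xᵀ * L⁻¹ * X).trace := by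
  have hX := hsmooth L hL 0 X
  have hnegX := hsmooth L hL 0 (-X)
  have hip : ip (g 0 L) (-X) = - ip (g 0 L) X := by simp [ip]
  simp only [zero_sub, sub_zero, sub_neg_eq_add, zero_add, transpose_neg,
    Matrix.neg_mul, Matrix.mul_neg, neg_neg, hip] at hX hnegX
  have hdomX := hdom L hL.posSemidef X
  have hdomNegX := hdom L hL.posSemidef (-X)
  have hΨ0 := apply_zero_le_mul_trace hzero hstab hL.posSemidef
  rw [nuclearNorm_neg] at hdomNegX
  linarith

end Admissible

lemma one_le_mul_add_mul_inv_of_nuclearNorm_le {m : ℕ} {n : Type*} [Fintype n] [DecidableEq n]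
    {α β : ℝ} (i : Fin m) (j : n)
    (h : ∀ L : Matrix (Fin m) (Fin m) ℝ, L.PosDef → ∀ X : Matrix (Fin m) n ℝ,
      nuclearNorm X ≤ α * L.trace + β / 2 * (Xᵀ * L⁻¹ * X).trace)
    {u : ℝ} (hu : 0 < u) : 1 ≤ α * u + β / 2 * u⁻¹ := by
  have hε : ∀ ε > 0, 1 ≤ α * (u + (m - 1) * ε) + β / 2 * u⁻¹ := by
    intro ε hε
    set v := Function.update (fun _ : Fin m => ε) i u
    have hvi : v i = u := Function.update_self i u fun _ => ε
    have hv : ∀ k, 0 < v k := fun k => by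
      rcases eq_or_ne k i with rfl | hk
      · exact hvi ▸ hu
      · simpa [v, hk] using hε
    have hL := h (diagonal v) (posDef_diagonal_iff.2 hv) (single i j 1)
    rwa [nuclearNorm_single_one, trace_diagonal_update,
      inv_diagonal_of_ne_zero fun k => (hv k).ne', trace_transpose_single_mul_diagonal_mul_single,
      Pi.inv_apply, hvi, Fintype.card_fin] at hL
  have hcont : ContinuousWithinAt (fun ε : ℝ => α * (u + (m - 1) * ε) + β / 2 * u⁻¹)
      (Set.Ioi 0) 0 := by fun_prop
  simpa using ge_of_tendsto hcont (eventually_nhdsWithin_of_forall hε)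

lemma one_half_le_mul_of_forall_one_le_mul_add_mul_inv {α β : ℝ}
    (h : ∀ u : ℝ, 0 < u → 1 ≤ α * u + β / 2 * u⁻¹) : 1 / 2 ≤ α * β := by
  rcases lt_or_ge 0 α with hα | hα
  · have hu := h (2 * α)⁻¹ (by positivity)
    rw [inv_inv, show α * (2 * α)⁻¹ = 1 / 2 by field_simp] at hu
    linarith
  · have hu := h (|β| + 1) (by positivity)
    have hαu : α * (|β| + 1) ≤ 0 := mul_nonpos_of_nonpos_of_nonneg hα (by positivity)
    have hβu : β / 2 * (|β| + 1)⁻¹ < 1 := by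
      rw [← div_eq_mul_inv, div_lt_one (by positivity)]
      linarith [le_abs_self β, abs_nonneg β]
    linarith

theorem stmt6_general {m n : ℕ} (hm : 0 < m) (hn : 0 < n) (α β : ℝ)
    (Ψ : Matrix (Fin m) (Fin n) ℝ → Matrix (Fin m) (Fin m) ℝ → ℝ)
    (g : Matrix (Fin m) (Fin n) ℝ → Matrix (Fin m) (Fin m) ℝ → Matrix (Fin m) (Fin n) ℝ)
    -- dominance
    (hdom : ∀ (L : Matrix (Fin m) (Fin m) ℝ), L.PosSemidef →
      ∀ X, nuclearNorm X ≤ Ψ X L)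
    (hzero : ∀ X, Ψ X 0 = nuclearNorm X)
    -- upper stability
    (hstab : ∀ L₁ L₂ : Matrix (Fin m) (Fin m) ℝ, L₁.PosSemidef → (L₂ - L₁).PosSemidef →
      ∀ X, Ψ X L₂ - Ψ X L₁ ≤ α * (L₂.trace - L₁.trace))
    -- `β`-smoothness of the Bregman divergence
    (hsmooth : ∀ L : Matrix (Fin m) (Fin m) ℝ, L.PosDef → ∀ X Y,
      Ψ Y L - Ψ X L - ip (g X L) (Y - X)
        ≤ β / 2 * ((X - Y)ᵀ * L⁻¹ * (X - Y)).trace) :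
    1 / 2 ≤ α * β := by
  refine one_half_le_mul_of_forall_one_le_mul_add_mul_inv fun _ hu => ?_
  exact one_le_mul_add_mul_inv_of_nuclearNorm_le ⟨0, hm⟩ ⟨0, hn⟩
    (fun _ hL => nuclearNorm_le_mul_trace_add_of_admissible hdom hzero hstab hsmooth hL) hu

/-- any `(α,β)`-admissible smoothing of the nuclear norm satisfies
`αβ ≥ 1/2`.  Here `Ψ(·;L)` is parametrized by PSD matrices `L`, `g X L` denotes its
gradient in `X` (characterized through directional derivatives), and the hypotheses
are dominance, upper stability with constant `α`, and `β`-smoothness of the Bregman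
divergence. -/
theorem stmt6 {m n : ℕ} (hm : 0 < m) (hn : 0 < n) (α β : ℝ)
    (Ψ : Matrix (Fin m) (Fin n) ℝ → Matrix (Fin m) (Fin m) ℝ → ℝ)
    (g : Matrix (Fin m) (Fin n) ℝ → Matrix (Fin m) (Fin m) ℝ → Matrix (Fin m) (Fin n) ℝ)
    -- dominance
    (hdom : ∀ (L : Matrix (Fin m) (Fin m) ℝ), L.PosSemidef →
      ∀ X, nuclearNorm X ≤ Ψ X L)
    (hzero : ∀ X, Ψ X 0 = nuclearNorm X)
    -- upper stability
    (hstab : ∀ L₁ L₂ : Matrix (Fin m) (Fin m) ℝ, L₁.PosSemidef → (L₂ - L₁).PosSemidef →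
      ∀ X, Ψ X L₂ - Ψ X L₁ ≤ α * (L₂.trace - L₁.trace))
    -- `g` is the gradient of `Ψ(·;L)` for positive definite `L`
    (hgrad : ∀ L : Matrix (Fin m) (Fin m) ℝ, L.PosDef → ∀ X D,
      HasDerivAt (fun t : ℝ => Ψ (X + t • D) L) (ip (g X L) D) 0)
    -- `β`-smoothness of the Bregman divergence
    (hsmooth : ∀ L : Matrix (Fin m) (Fin m) ℝ, L.PosDef → ∀ X Y,
      Ψ Y L - Ψ X L - ip (g X L) (Y - X)
        ≤ β / 2 * ((X - Y)ᵀ * L⁻¹ * (X - Y)).trace) :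
    1 / 2 ≤ α * β :=
  stmt6_general hm hn α β Ψ g hdom hzero hstab hsmooth
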